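/- With ε_p and β fixed, define the stress map σ on symmetric 3×3 matrices by σ(ε) = C(ε − ε_p) − (2μ/(2μ+ϖ)) ⟨1 − σ_Y/|σ*(ε)|⟩ σ*(ε) when σ*(ε) ≠ 0 and σ(ε) = C(ε − ε_p) when σ*(ε) = 0, where σ*(ε) = I_dev(C(ε − ε_p)) − β and ⟨x⟩ = max(x,0). On the open set U_p = { ε : |σ*(ε)| > σ_Y } (the plastic regime), σ is differentiable, and its Fréchet derivative at ε ∈ U_p is the consistent tangent operator C_T given by C_T h = C h − (4μ²/(2μ+ϖ)) [ γ(ε) · I_dev h + (1 − γ(ε)) · (⟪σ*(ε), h⟫ / |σ*(ε)|²) · σ*(ε) ], where γ(ε) = 1 − σ_Y/|σ*(ε)|. -/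

import Mathlib

open Matrix

noncomputable section

/-- Symmetric-matrix setting: we work with 3×3 real matrices. -/
abbrev Mat3 : Type := Matrix (Fin 3) (Fin 3) ℝ

/-- Deviatoric projector: `I_dev A = A - (1/3) tr(A) • 1`. -/
def Idev (A : Mat3) : Mat3 := A - ((1 / 3 : ℝ) * A.trace) • (1 : Mat3)

/-- Elastic tensor: `C A = κ tr(A) • 1 + 2μ • I_dev A`. -/
def Cel (κ μ : ℝ) (A : Mat3) : Mat3 :=
  (κ * A.trace) • (1 : Mat3) + (2 * μ) • Idev A

/-- Frobenius inner product `⟪A, B⟫ = tr(Aᵀ B)`. -/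
def finner (A B : Mat3) : ℝ := (Aᵀ * B).trace

/-- Frobenius norm `|A| = ⟪A, A⟫^{1/2}`. -/
def fnorm (A : Mat3) : ℝ := Real.sqrt (finner A A)

attribute [local instance] Matrix.frobeniusNormedAddCommGroup Matrix.frobeniusNormedSpace

/-- Trial relative stress `σ*(ε) = I_dev(C(ε - ε_p)) - β`, as a function of the strain. -/
def relStress (κ μ : ℝ) (εp β : Mat3) (ε : Mat3) : Mat3 :=
  Idev (Cel κ μ (ε - εp)) - β

open Classical in
/-- The radial-return stress map `ε ↦ σ(ε)` for fixed plastic strain and back stress. -/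
def stressMap (κ μ ϖ σY : ℝ) (εp β : Mat3) (ε : Mat3) : Mat3 :=
  if relStress κ μ εp β ε = 0 then Cel κ μ (ε - εp)
  else
    Cel κ μ (ε - εp) -
      ((2 * μ / (2 * μ + ϖ)) * max (1 - σY / fnorm (relStress κ μ εp β ε)) 0) •
        relStress κ μ εp β ε

section Aux

lemma finner_add_left (A B C : Mat3) : finner (A + B) C = finner A C + finner B C := by
  simp [finner, Matrix.transpose_add, Matrix.add_mul]

lemma finner_smul_left (c : ℝ) (A B : Mat3) : finner (c • A) B = c * finner A B := by
  simp [finner, Matrix.transpose_smul, Matrix.smul_mul]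

lemma finner_add_right (A B C : Mat3) : finner A (B + C) = finner A B + finner A C := by
  simp [finner, Matrix.mul_add]

lemma finner_smul_right (c : ℝ) (A B : Mat3) : finner A (c • B) = c * finner A B := by
  simp [finner, Matrix.mul_smul]

lemma finner_sub_right (A B C : Mat3) : finner A (B - C) = finner A B - finner A C := by
  simp [finner, Matrix.mul_sub]

lemma finner_comm (A B : Mat3) : finner A B = finner B A := by
  rw [finner, ← Matrix.trace_transpose, Matrix.transpose_mul, Matrix.transpose_transpose, finner]

lemma finner_self_nonneg (A : Mat3) : 0 ≤ finner A A := by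
  have : finner A A = ∑ j, ∑ i, (A i j)^2 := by
    simp [finner, Matrix.trace, Matrix.mul_apply, Matrix.diag, sq]
  rw [this]
  positivity

lemma finner_one_right (A : Mat3) : finner A 1 = A.trace := by
  simp [finner]

lemma trace_Idev (A : Mat3) : (Idev A).trace = 0 := by
  simp [Idev, Matrix.trace_sub, Matrix.trace_smul, Matrix.trace_one]
  ring

lemma Idev_Idev (A : Mat3) : Idev (Idev A) = Idev A := by
  rw [show Idev (Idev A) = Idev A - ((1/3:ℝ) * (Idev A).trace) • 1 from rfl, trace_Idev]
  simp

lemma Idev_one : Idev (1 : Mat3) = 0 := by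
  simp [Idev, Matrix.trace_one]

lemma finner_Idev_right (A B : Mat3) (hA : A.trace = 0) : finner A (Idev B) = finner A B := by
  rw [Idev, finner_sub_right, finner_smul_right, finner_one_right, hA]
  ring

lemma Idev_add (A B : Mat3) : Idev (A + B) = Idev A + Idev B := by
  simp only [Idev, Matrix.trace_add, mul_add, add_smul]
  abel

lemma Idev_smul (c : ℝ) (A : Mat3) : Idev (c • A) = c • Idev A := by
  simp only [Idev, Matrix.trace_smul, smul_sub, smul_smul, smul_eq_mul]
  ring_nf

lemma Idev_Cel (κ μ : ℝ) (A : Mat3) : Idev (Cel κ μ A) = (2*μ) • Idev A := by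
  rw [Cel, Idev_add, Idev_smul, Idev_smul, Idev_one, Idev_Idev]
  simp

noncomputable def IdevL : Mat3 →ₗ[ℝ] Mat3 where
  toFun := Idev
  map_add' := Idev_add
  map_smul' c A := Idev_smul c A

noncomputable def CelL (κ μ : ℝ) : Mat3 →ₗ[ℝ] Mat3 where
  toFun := Cel κ μ
  map_add' A B := by
    simp only [Cel, Idev_add, Matrix.trace_add, mul_add, add_smul, smul_add]
    abel
  map_smul' c A := by
    simp only [Cel, Idev_smul c A, Matrix.trace_smul, RingHom.id_apply, smul_add, smul_smul,
      smul_eq_mul]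
    ring_nf

end Aux
lemma Cel_sub (κ μ : ℝ) (A B : Mat3) : Cel κ μ (A - B) = Cel κ μ A - Cel κ μ B :=
  (CelL κ μ).map_sub A B

lemma Idev_sub (A B : Mat3) : Idev (A - B) = Idev A - Idev B :=
  IdevL.map_sub A B

noncomputable def finBil : Mat3 →ₗ[ℝ] Mat3 →ₗ[ℝ] ℝ :=
  LinearMap.mk₂ ℝ finner finner_add_left finner_smul_left finner_add_right finner_smul_right

noncomputable def finCLM : Mat3 →L[ℝ] Mat3 →L[ℝ] ℝ :=
  LinearMap.toContinuousLinearMap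
    ((LinearMap.toContinuousLinearMap :
        (Mat3 →ₗ[ℝ] ℝ) ≃ₗ[ℝ] (Mat3 →L[ℝ] ℝ)).toLinearMap.comp finBil)

@[simp] lemma finCLM_apply (A B : Mat3) : finCLM A B = finner A B := rfl
theorem plastic_regime_consistent_tangent
    (κ μ ϖ σY : ℝ) (hκ : 0 < κ) (hμ : 0 < μ) (hϖ : 0 < ϖ) (hσY : 0 < σY)
    (εp β : Mat3) (hεp : εp.IsSymm) (hβ : β.IsSymm) (hβdev : Idev β = β) :
    IsOpen {ε : Mat3 | σY < fnorm (relStress κ μ εp β ε)} ∧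
    ∀ ε ∈ {ε : Mat3 | σY < fnorm (relStress κ μ εp β ε)},
      ∃ CT : Mat3 →L[ℝ] Mat3,
        (∀ h : Mat3, CT h =
          Cel κ μ h -
            (4 * μ ^ 2 / (2 * μ + ϖ)) •
              ((1 - σY / fnorm (relStress κ μ εp β ε)) • Idev h +
                ((1 - (1 - σY / fnorm (relStress κ μ εp β ε))) *
                    (finner (relStress κ μ εp β ε) h / fnorm (relStress κ μ εp β ε) ^ 2)) •
                  relStress κ μ εp β ε)) ∧
        HasFDerivAt (stressMap κ μ ϖ σY εp β) CT ε := by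
  have h2μϖ : (2 * μ + ϖ) ≠ 0 := by positivity
  set RS : Mat3 → Mat3 := relStress κ μ εp β with hRSdef
  have htrβ : β.trace = 0 := by rw [← hβdev]; exact trace_Idev β
  have htrRS : ∀ x, (RS x).trace = 0 := by
    intro x
    rw [hRSdef]
    simp [relStress, Matrix.trace_sub, trace_Idev, htrβ]
  set L : Mat3 →L[ℝ] Mat3 := LinearMap.toContinuousLinearMap (IdevL.comp (CelL κ μ)) with hLdef
  set K : Mat3 →L[ℝ] Mat3 := LinearMap.toContinuousLinearMap (CelL κ μ) with hKdef
  have hKapp : ∀ h : Mat3, K h = Cel κ μ h := fun h => rfl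
  have hLapp : ∀ h : Mat3, L h = (2 * μ) • Idev h := fun h => by
    rw [show L h = Idev (Cel κ μ h) from rfl, Idev_Cel]
  have hRSaff : ∀ x, RS x = L x + (-(Idev (Cel κ μ εp)) - β) := by
    intro x
    rw [hRSdef, show L x = Idev (Cel κ μ x) from rfl]
    show Idev (Cel κ μ (x - εp)) - β = _
    rw [Cel_sub, Idev_sub]
    abel
  have hRSd : ∀ x, HasFDerivAt RS L x := by
    intro x
    have h1 : HasFDerivAt (fun y => L y + (-(Idev (Cel κ μ εp)) - β)) L x :=
      L.hasFDerivAt.add_const _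
    exact h1.congr_of_eventuallyEq (Filter.Eventually.of_forall hRSaff)
  have hRScont : Continuous RS := by
    have h1 : Continuous fun x : Mat3 => L x + (-(Idev (Cel κ μ εp)) - β) :=
      L.continuous.add continuous_const
    exact h1.congr fun x => (hRSaff x).symm
  have hQcont : Continuous fun x => finner (RS x) (RS x) := by
    have h1 := finCLM.isBoundedBilinearMap.continuous.comp (hRScont.prodMk hRScont)
    exact h1
  have hNcont : Continuous fun x => fnorm (RS x) := by
    simpa [fnorm, Function.comp_def] using Real.continuous_sqrt.comp hQcont
  have hopen : IsOpen {ε : Mat3 | σY < fnorm (RS ε)} := isOpen_lt continuous_const hNcont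
  refine ⟨hopen, ?_⟩
  intro ε hε
  have hε' : σY < fnorm (RS ε) := hε
  have hNpos : 0 < fnorm (RS ε) := hσY.trans hε'
  have hNne : fnorm (RS ε) ≠ 0 := ne_of_gt hNpos
  have hqpos : 0 < finner (RS ε) (RS ε) := Real.sqrt_pos.mp hNpos
  have hqne : finner (RS ε) (RS ε) ≠ 0 := ne_of_gt hqpos
  have hNsq : fnorm (RS ε) ^ 2 = finner (RS ε) (RS ε) := Real.sq_sqrt (le_of_lt hqpos)
  set Dq : Mat3 →L[ℝ] ℝ :=
    (finCLM.isBoundedBilinearMap.deriv (RS ε, RS ε)).comp (L.prod L) with hDqdef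
  have hq : HasFDerivAt (fun x => finner (RS x) (RS x)) Dq ε := by
    have h1 := (finCLM.isBoundedBilinearMap.hasFDerivAt (RS ε, RS ε)).comp ε
      ((hRSd ε).prodMk (hRSd ε))
    exact h1
  have hDqapp : ∀ h : Mat3, Dq h = (4 * μ) * finner (RS ε) h := by
    intro h
    rw [hDqdef]
    show finner (RS ε) (L h) + finner (L h) (RS ε) = _
    rw [hLapp, finner_smul_right, finner_smul_left,
      finner_Idev_right _ _ (htrRS ε), finner_comm (Idev h),
      finner_Idev_right _ _ (htrRS ε)]
    ring
  have hN : HasFDerivAt (fun x => fnorm (RS x)) ((1 / (2 * fnorm (RS ε))) • Dq) ε := by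
    have h1 := hq.sqrt hqne
    exact h1
  have hinv : HasFDerivAt (fun x => (fnorm (RS x))⁻¹)
      (-((fnorm (RS ε) ^ 2)⁻¹ • ((1 / (2 * fnorm (RS ε))) • Dq))) ε := by
    have h1 := (hasDerivAt_inv hNne).comp_hasFDerivAt ε hN
    exact h1.congr_fderiv (neg_smul _ _)
  have hm : HasFDerivAt (fun x => (2 * μ / (2 * μ + ϖ)) * (1 - σY * (fnorm (RS x))⁻¹))
      ((2 * μ / (2 * μ + ϖ)) •
        (-(σY • -((fnorm (RS ε) ^ 2)⁻¹ • ((1 / (2 * fnorm (RS ε))) • Dq))))) ε :=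
    ((hinv.const_mul σY).const_sub 1).const_mul _
  have hsm := hm.smul (hRSd ε)
  have hgD := (K.hasFDerivAt.sub_const (Cel κ μ εp)).sub hsm
  have hev : stressMap κ μ ϖ σY εp β =ᶠ[nhds ε] fun x =>
      (K x - Cel κ μ εp) - ((2 * μ / (2 * μ + ϖ)) * (1 - σY * (fnorm (RS x))⁻¹)) • RS x := by
    filter_upwards [hopen.mem_nhds hε] with x hx
    have hx' : σY < fnorm (RS x) := hx
    have hne0 : RS x ≠ 0 := by
      intro h0
      rw [h0] at hx'
      have hz : fnorm (0 : Mat3) = 0 := by simp [fnorm, finner]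
      rw [hz] at hx'
      linarith
    have hmax : max (1 - σY / fnorm (RS x)) 0 = 1 - σY / fnorm (RS x) := by
      apply max_eq_left
      have hpos : 0 < fnorm (RS x) := hσY.trans hx'
      have hle : σY / fnorm (RS x) ≤ 1 := by
        rw [div_le_one hpos]
        exact le_of_lt hx'
      linarith
    show stressMap κ μ ϖ σY εp β x = _
    rw [stressMap, ← hRSdef, if_neg hne0, hmax, Cel_sub, div_eq_mul_inv, div_eq_mul_inv σY, hKapp x]
  have hstress := hgD.congr_of_eventuallyEq hev
  refine ⟨_, ?_, hstress⟩
  intro h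
  show Cel κ μ h - (((2 * μ / (2 * μ + ϖ)) * (1 - σY * (fnorm (RS ε))⁻¹)) • L h +
    ((2 * μ / (2 * μ + ϖ)) * (-(σY * -((fnorm (RS ε) ^ 2)⁻¹ * ((1 / (2 * fnorm (RS ε))) * Dq h))))) •
      RS ε) = _
  rw [hLapp, hDqapp]
  match_scalars
  all_goals (field_simp [hNne, h2μϖ]; try ring)
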